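/- arXiv:2105.07321 — 6 statements merged into one kernel-verified Lean document; each statement's English description precedes it below -/
import Mathlib

section
/- If every species has a generalized outflow reaction (for each index i there is a reaction a_i·e_i → 0 with a_i > 0 and positive rate constant), then every diagonal entry of the Jacobian matrix J(x,κ) of the mass-action system, evaluated at any positive state x and positive rate constants κ, is strictly negative. -/
open Finset

/-- For a mass-action system (reactions `y r → y' r` with rate constants `κ r`)
with no one-step catalysis, if every species has a generalized outflow reaction,
then every diagonal entry of the Jacobian
`J j p = Σ_r κ_r · (y_{rp} x^{y_r} / x_p) · (y'_{rj} − y_{rj})`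
is strictly negative at every positive state. -/
theorem stmt_5 (n m : ℕ) (y y' : Fin m → Fin n → ℝ) (κ : Fin m → ℝ)
    (hy : ∀ r i, 0 ≤ y r i) (hy' : ∀ r i, 0 ≤ y' r i) (hκ : ∀ r, 0 < κ r)
    (hnocat : ∀ r i, y r i = 0 ∨ y' r i = 0)
    (hout : ∀ i : Fin n, ∃ r a, 0 < a ∧
      (∀ j, y r j = if j = i then a else 0) ∧ ∀ j, y' r j = 0)
    (x : Fin n → ℝ) (hx : ∀ i, 0 < x i) :
    ∀ p : Fin n,
      (∑ r, κ r * (y r p * (∏ i, x i ^ y r i) / x p) * (y' r p - y r p)) < 0 := by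
  intro p
  have hprod : ∀ r : Fin m, 0 < ∏ i, x i ^ y r i := by
    intro r
    exact Finset.prod_pos fun i _ => Real.rpow_pos_of_pos (hx i) _
  have hle : ∀ r : Fin m,
      κ r * (y r p * (∏ i, x i ^ y r i) / x p) * (y' r p - y r p) ≤ 0 := by
    intro r
    rcases hnocat r p with h | h
    · simp [h]
    · rw [h]
      have h1 : 0 ≤ κ r * (y r p * (∏ i, x i ^ y r i) / x p) :=
        mul_nonneg (hκ r).le (div_nonneg (mul_nonneg (hy r p) (hprod r).le) (hx p).le)
      nlinarith [hy r p]
  obtain ⟨r, a, ha, hyr, hy'r⟩ := hout p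
  have hlt : κ r * (y r p * (∏ i, x i ^ y r i) / x p) * (y' r p - y r p) < 0 := by
    rw [hy'r p, hyr p, if_pos rfl]
    have h1 : 0 < κ r * (a * (∏ i, x i ^ y r i) / x p) :=
      mul_pos (hκ r) (div_pos (mul_pos ha (hprod r)) (hx p))
    nlinarith
  calc (∑ r, κ r * (y r p * (∏ i, x i ^ y r i) / x p) * (y' r p - y r p))
      < ∑ _r : Fin m, (0:ℝ) := by
        apply Finset.sum_lt_sum (fun i _ => hle i) ⟨r, Finset.mem_univ r, hlt⟩
    _ = 0 := by simp
end

section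
/- The map Φ from the DSR graph of a modified network to the DSR graph of the original network, which is the identity on species nodes and sends each modified reaction node to the reaction node it was constructed from, is a graph homomorphism: every edge (X, R̃) of the modified DSR graph maps to an edge (X, Φ(R̃)) of the original DSR graph, and if (X, R̃) is directed then (X, Φ(R̃)) is either directed with the same orientation or undirected. -/
/-- A reaction network on `n` species: `R` indexes the reaction nodes
(a reversible pair of reactions counts as one node), `src r`/`tgt r` are the
reactant/product stoichiometric vectors, and `rev r` records reversibility.
Generalized inflows/outflows are assumed not to be included in `R`. -/
structure Net (n : ℕ) where
  R : Type
  src : R → Fin n → ℕ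
  tgt : R → Fin n → ℕ
  rev : R → Prop

namespace Net

variable {n : ℕ}

/-- (N2): no one-step catalysis. -/
def noCat (N : Net n) : Prop := ∀ r i, N.src r i = 0 ∨ N.tgt r i = 0

/-- The number of distinct reactant species of reaction `r`. -/
def numReact (N : Net n) (r : N.R) : ℕ :=
  (Finset.univ.filter fun i => N.src r i ≠ 0).card

/-- (N3): every reaction has at most two distinct reactant species. -/
def atMostTwo (N : Net n) : Prop := ∀ r, N.numReact r ≤ 2

/-- A bispecies reaction: exactly two distinct reactant species. -/
def bisp (N : Net n) (r : N.R) : Prop := N.numReact r = 2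

/-- (N4): every bispecies reaction is irreversible. -/
def bispIrrev (N : Net n) : Prop := ∀ r, N.bisp r → ¬ N.rev r

/-- Species `i` is adjacent to the R-node `r` in the DSR graph. -/
def edge (N : Net n) (i : Fin n) (r : N.R) : Prop := N.src r i ≠ 0 ∨ N.tgt r i ≠ 0

/-- The edge between `i` and `r` is directed (toward the species `i`):
the reaction is irreversible and `i` is a product species only. -/
def dir (N : Net n) (i : Fin n) (r : N.R) : Prop :=
  ¬ N.rev r ∧ N.src r i = 0 ∧ N.tgt r i ≠ 0

/-- The stoichiometric label of the edge between `i` and `r` (for a network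
with no one-step catalysis at most one summand is nonzero). -/
def lab (N : Net n) (i : Fin n) (r : N.R) : ℕ := N.src r i + N.tgt r i

/-- The edges from `i` and `j` to `r` form a c-pair. -/
def cpair (N : Net n) (r : N.R) (i j : Fin n) : Prop :=
  i ≠ j ∧ N.src r i ≠ 0 ∧ N.src r j ≠ 0

/-- Bispecies production edge: a directed edge from a bispecies R-node to one
of its product species. -/
def bpe (N : Net n) (i : Fin n) (r : N.R) : Prop := N.bisp r ∧ N.dir i r

/-- The modified network: reactions with at most one reactant species are kept,
while each bispecies reaction `y → y'` is replaced, for each reactant species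
`i`, by the reaction `yᵢ·eᵢ → y' + y − yᵢ·eᵢ` (irreversible). -/
def modified (N : Net n) : Net n where
  R := {r : N.R // ¬ N.bisp r} ⊕ {p : N.R × Fin n // N.bisp p.1 ∧ N.src p.1 p.2 ≠ 0}
  src := Sum.elim (fun r j => N.src r.1 j)
    (fun p j => if j = p.1.2 then N.src p.1.1 j else 0)
  tgt := Sum.elim (fun r j => N.tgt r.1 j)
    (fun p j => if j = p.1.2 then N.tgt p.1.1 j else N.tgt p.1.1 j + N.src p.1.1 j)
  rev := Sum.elim (fun r => N.rev r.1) (fun _ => False)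

/-- The map `Φ` on R-nodes: identity on copied reactions, and each modified
reaction node is sent to the original reaction it arose from.  (On species
nodes `Φ` is the identity.) -/
def phi (N : Net n) : (N.modified).R → N.R :=
  Sum.elim (fun r => r.1) (fun p => p.1.1)

/-- A cycle in the DSR graph with `m+2` species nodes `s k` and `m+2` reaction
nodes `r k`, traversed `s k → r k → s (k+1) → ⋯`; the traversal must be
compatible with edge orientations (directed edges point toward species, so the
edges traversed species-to-reaction must be undirected), and the cycle is
simple. -/
structure Cycle (N : Net n) (m : ℕ) where
  s : Fin (m + 2) → Fin n
  r : Fin (m + 2) → N.R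
  edge_sr : ∀ k, N.edge (s k) (r k)
  undir_sr : ∀ k, ¬ N.dir (s k) (r k)
  edge_rs : ∀ k, N.edge (s (k + 1)) (r k)
  sinj : Function.Injective s
  rinj : Function.Injective r

/-- s-cycle: the alternating product/quotient of stoichiometric labels along
the cycle equals 1, i.e. the product of the labels of the species-to-reaction
edges equals that of the reaction-to-species edges. -/
def Cycle.sCycle {N : Net n} {m : ℕ} (C : N.Cycle m) : Prop :=
  (∏ k, N.lab (C.s k) (C.r k)) = ∏ k, N.lab (C.s (k + 1)) (C.r k)

/-- The cycle contains a bispecies production edge. -/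
def Cycle.hasBPE {N : Net n} {m : ℕ} (C : N.Cycle m) : Prop :=
  ∃ k, N.bpe (C.s (k + 1)) (C.r k)

/-- The edge `(i, ρ)` occurs in `C` traversed species-to-reaction. -/
def Cycle.eS {N : Net n} {m : ℕ} (C : N.Cycle m) (i : Fin n) (ρ : N.R) : Prop :=
  ∃ k, C.s k = i ∧ C.r k = ρ

/-- The edge `(i, ρ)` occurs in `C` traversed reaction-to-species. -/
def Cycle.eR {N : Net n} {m : ℕ} (C : N.Cycle m) (i : Fin n) (ρ : N.R) : Prop :=
  ∃ k, C.s (k + 1) = i ∧ C.r k = ρ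

/-- The edge `(i, ρ)` occurs in the cycle `C`. -/
def Cycle.mem {N : Net n} {m : ℕ} (C : N.Cycle m) (i : Fin n) (ρ : N.R) : Prop :=
  C.eS i ρ ∨ C.eR i ρ

/-- The edge `(i, ρ)` lies in the image under `Φ` of the cycle `C` of the
modified DSR graph. -/
def Cycle.phiMem {N : Net n} {m : ℕ} (C : (N.modified).Cycle m) (i : Fin n)
    (ρ : N.R) : Prop :=
  ∃ k, N.phi (C.r k) = ρ ∧ (C.s k = i ∨ C.s (k + 1) = i)

/-- The image of `C` under `Φ` is a c-pair of the original DSR graph. -/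
def Cycle.isCPairImage {N : Net n} {m : ℕ} (C : (N.modified).Cycle m) : Prop :=
  ∃ r i j, N.cpair r i j ∧ ∀ i' r', C.phiMem i' r' ↔ (r' = r ∧ (i' = i ∨ i' = j))

/-- A path of odd length `2t+1` in the DSR graph, with species nodes
`s 0, …, s t` and reaction nodes `r 0, …, r t`, alternating
`s 0 – r 0 – s 1 – r 1 – ⋯ – s t – r t`; one endpoint is a species node and
the other is a reaction node. -/
structure SRPath (N : Net n) (t : ℕ) where
  s : ℕ → Fin n
  r : ℕ → N.R
  sinj : ∀ k l, k ≤ t → l ≤ t → s k = s l → k = l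
  rinj : ∀ k l, k ≤ t → l ≤ t → r k = r l → k = l

/-- The edge `(i, ρ)` occurs in the path `P`. -/
def SRPath.memEdge {N : Net n} {t : ℕ} (P : N.SRPath t) (i : Fin n) (ρ : N.R) : Prop :=
  (∃ k ≤ t, P.s k = i ∧ P.r k = ρ) ∨ (∃ k < t, P.s (k + 1) = i ∧ P.r k = ρ)

/-- The species node `i` occurs in the path `P`. -/
def SRPath.memS {N : Net n} {t : ℕ} (P : N.SRPath t) (i : Fin n) : Prop :=
  ∃ k ≤ t, P.s k = i

/-- The reaction node `ρ` occurs in the path `P`. -/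
def SRPath.memR {N : Net n} {t : ℕ} (P : N.SRPath t) (ρ : N.R) : Prop :=
  ∃ k ≤ t, P.r k = ρ

/-- Two paths are vertex-disjoint. -/
def SRPath.Disjoint {N : Net n} {t1 t2 : ℕ} (P : N.SRPath t1) (Q : N.SRPath t2) : Prop :=
  (∀ i, ¬ (P.memS i ∧ Q.memS i)) ∧ ∀ ρ, ¬ (P.memR ρ ∧ Q.memR ρ)

/-- The edge `(i, ρ)` is shared by the cycles `C1` and `C2`. -/
def sharedEdge {N : Net n} {m1 m2 : ℕ} (C1 : N.Cycle m1) (C2 : N.Cycle m2)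
    (i : Fin n) (ρ : N.R) : Prop := C1.mem i ρ ∧ C2.mem i ρ

/-- Each shared edge is traversed with the same orientation by both cycles. -/
def consistent {N : Net n} {m1 m2 : ℕ} (C1 : N.Cycle m1) (C2 : N.Cycle m2) : Prop :=
  ∀ i ρ, sharedEdge C1 C2 i ρ →
    ((C1.eS i ρ ↔ C2.eS i ρ) ∧ (C1.eR i ρ ↔ C2.eR i ρ))

/-- `C1` and `C2` have S-to-R intersection: the set of shared edges is
non-empty, orientations are consistent, and the shared edges decompose into
pairwise vertex-disjoint paths of odd length (each with one species endpoint
and one reaction endpoint) — i.e. every connected component of the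
intersection is such a path. -/
def SRIntxn {N : Net n} {m1 m2 : ℕ} (C1 : N.Cycle m1) (C2 : N.Cycle m2) : Prop :=
  (∃ i ρ, sharedEdge C1 C2 i ρ) ∧ consistent C1 C2 ∧
    ∃ (ι : Type) (t : ι → ℕ) (P : (a : ι) → N.SRPath (t a)),
      (∀ i ρ, sharedEdge C1 C2 i ρ ↔ ∃ a, (P a).memEdge i ρ) ∧
      ∀ a b, a ≠ b → (P a).Disjoint (P b)

/-- The DSR graph of `N` has an S-to-R intersection. -/
def hasSRIntxn (N : Net n) : Prop :=
  ∃ (m1 m2 : ℕ) (C1 : N.Cycle m1) (C2 : N.Cycle m2), SRIntxn C1 C2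

end Net

/-- `Φ` is a graph homomorphism from the modified DSR graph to the original
one: every edge `(X, R̃)` maps to an edge `(X, Φ(R̃))`, and the image of an
edge admits the orientations of the input (in particular the image of an
undirected edge is undirected, and the image of a directed edge is either
directed with the same orientation or undirected). -/
theorem stmt_8 {n : ℕ} (N : Net n) (h2 : N.noCat) (h3 : N.atMostTwo)
    (h4 : N.bispIrrev) (i : Fin n) (rt : (N.modified).R)
    (he : (N.modified).edge i rt) :
    N.edge i (N.phi rt) ∧ (¬ (N.modified).dir i rt → ¬ N.dir i (N.phi rt)) := by
  obtain r | ⟨⟨r, j⟩, hb, hs⟩ := rt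
  · exact ⟨he, fun h hd => h hd⟩
  · simp only [Net.modified, Net.edge, Net.dir, Net.phi, Sum.elim_inr] at he ⊢
    constructor
    · rcases he with h | h
      · by_cases hij : i = j
        · subst hij; exact Or.inl hs
        · simp [hij] at h
      · by_cases hij : i = j
        · subst hij; simp at h; exact Or.inr h
        · simp [hij] at h
          rcases Nat.eq_zero_or_pos (N.src r i) with h0 | h0
          · right; omega
          · exact Or.inl h0.ne'
    · intro hnd hd
      obtain ⟨_, hsi, hti⟩ := hd
      apply hnd
      by_cases hij : i = j
      · subst hij; exact ⟨not_false, by simp [hsi], by simp [hti]⟩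
      · exact ⟨not_false, by simp [hij], by simp [hij, hsi, hti]⟩
end

section
/- The graph homomorphism Φ from the modified DSR graph to the original DSR graph is surjective on both vertices and edges. -/
/-- `Φ` is surjective on vertices (on species nodes it is the identity, and
every reaction node of the original DSR graph has a preimage) and on edges. -/
theorem stmt_9 {n : ℕ} (N : Net n) (h2 : N.noCat) (h3 : N.atMostTwo)
    (h4 : N.bispIrrev) :
    Function.Surjective N.phi ∧
    ∀ (i : Fin n) (r : N.R), N.edge i r →
      ∃ rt : (N.modified).R, N.phi rt = r ∧ (N.modified).edge i rt := by
  have key : ∀ r : N.R, N.bisp r → ∃ i, N.src r i ≠ 0 := by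
    intro r hb
    have : (Finset.univ.filter fun i => N.src r i ≠ 0).Nonempty := by
      rw [← Finset.card_pos, Net.bisp, Net.numReact] at *
      omega
    obtain ⟨i, hi⟩ := this
    exact ⟨i, (Finset.mem_filter.mp hi).2⟩
  constructor
  · intro r
    by_cases hb : N.bisp r
    · obtain ⟨i, hi⟩ := key r hb
      exact ⟨Sum.inr ⟨(r, i), hb, hi⟩, rfl⟩
    · exact ⟨Sum.inl ⟨r, hb⟩, rfl⟩
  · intro i r he
    by_cases hb : N.bisp r
    · by_cases hs : N.src r i = 0
      · have ht : N.tgt r i ≠ 0 := he.resolve_left (by simpa using hs)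
        obtain ⟨j, hj⟩ := key r hb
        refine ⟨Sum.inr ⟨(r, j), hb, hj⟩, rfl, Or.inr ?_⟩
        show (if i = j then N.tgt r i else N.tgt r i + N.src r i) ≠ 0
        by_cases hij : i = j
        · rw [if_pos hij]; exact ht
        · rw [if_neg hij]; omega
      · refine ⟨Sum.inr ⟨(r, i), hb, hs⟩, rfl, Or.inl ?_⟩
        simp [Net.modified, hs]
    · exact ⟨Sum.inl ⟨r, hb⟩, rfl, he⟩
end

section
/- Any cycle in the modified DSR graph that Φ maps onto a c-pair of the original DSR graph is an s-cycle: the two edges adjacent to each of its species nodes have equal stoichiometric coefficients, so the alternating product/quotient of labels around the cycle equals 1. -/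
lemma modified_lab_eq {n : ℕ} (N : Net n) (ρ : (N.modified).R) (j : Fin n) :
    (N.modified).lab j ρ = N.lab j (N.phi ρ) := by
  cases ρ with
  | inl r => rfl
  | inr p =>
    simp only [Net.modified, Net.lab, Net.phi, Sum.elim_inr]
    by_cases h : j = p.1.2 <;> simp [h] <;> omega

/-- Any cycle of the modified DSR graph that `Φ` maps onto a c-pair (i.e. all
of whose R-nodes map to one original reaction node) is an s-cycle; indeed the
two edges adjacent to each of its species nodes carry equal stoichiometric
labels. -/
theorem stmt_11 {n : ℕ} (N : Net n) (h2 : N.noCat) (h3 : N.atMostTwo)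
    (h4 : N.bispIrrev) {m : ℕ} (C : (N.modified).Cycle m) (r : N.R)
    (hconst : ∀ k, N.phi (C.r k) = r) :
    (∀ k, (N.modified).lab (C.s (k + 1)) (C.r k)
        = (N.modified).lab (C.s (k + 1)) (C.r (k + 1))) ∧
    C.sCycle := by
  have hlab : ∀ k j, (N.modified).lab j (C.r k) = N.lab j r := by
    intro k j
    rw [modified_lab_eq, hconst]
  constructor
  · intro k; rw [hlab, hlab]
  · unfold Net.Cycle.sCycle
    have h1 : ∀ k, (N.modified).lab (C.s k) (C.r k) = N.lab (C.s k) r :=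
      fun k => hlab k _
    have h2' : ∀ k, (N.modified).lab (C.s (k + 1)) (C.r k) = N.lab (C.s (k + 1)) r :=
      fun k => hlab k _
    simp only [h1, h2']
    exact Fintype.prod_equiv (Equiv.subRight (1 : Fin (m + 2)))
      (fun k => N.lab (C.s k) r) (fun k => N.lab (C.s (k + 1)) r)
      (fun x => by simp)
end

section
/- Suppose no cycle in the original DSR graph D contains a bispecies production edge. Then for any cycle C̃ of the modified DSR graph D̃, either Φ(C̃) is a c-pair in D, or Φ restricted to C̃ is injective (on both vertices and edges) and Φ(C̃) is a cycle in D. -/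
/-!
`Φ` identifies two R-nodes of `D̃` only when they are the nodes `(ρ, x)`, `(ρ, y)` into which a
bispecies reaction `ρ` with reactants `x`, `y` is split, and a cycle of `D̃` can only enter
`(ρ, x)` from `x`. The heart of the proof is that a cycle of `D̃` also leaves every split node
`(ρ, x)` through a reactant of `ρ`. Otherwise, take a shortest such cycle: if `Φ` is injective on
it, its image is a cycle of `D` with a bispecies production edge; if not, two split nodes of one
reaction occur on it, and either the arc leaving one of them through a product closes up, along
the edge to the other, into a shorter bad cycle, or both are left through reactants, which forces
the cycle to be `x → (ρ, x) → y → (ρ, y) → x` and contradicts badness. Applied to an arbitrary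
cycle, the same dichotomy shows that `Φ` is injective on it or it is mapped onto a c-pair.
-/

lemma Fin.eq_or_eq_add_one_of_add_one_add_one_eq {m : ℕ} {k : Fin (m + 2)}
    (h : k + 1 + 1 = k) (t : Fin (m + 2)) : t = k ∨ t = k + 1 := by
  rcases m with _ | m
  · revert k t; decide
  · rw [add_assoc k, add_eq_left, Fin.ext_iff, Fin.val_add, Fin.val_one] at h
    simp [Nat.mod_eq_of_lt] at h

lemma Fin.castLE_add_one {L m : ℕ} (h : L + 2 ≤ m + 2) {t : Fin (L + 2)}
    (ht : t ≠ Fin.last (L + 1)) : Fin.castLE h (t + 1) = Fin.castLE h t + 1 := by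
  have := Fin.val_lt_last ht
  ext
  simp only [Fin.val_castLE, Fin.val_add, Fin.val_one]
  rw [Nat.mod_eq_of_lt (by omega), Nat.mod_eq_of_lt (by omega)]

namespace Net

variable {n : ℕ} {N : Net n}

lemma eq_or_eq_of_bisp {ρ : N.R} {i j z : Fin n} (hb : N.bisp ρ) (hij : i ≠ j)
    (hi : N.src ρ i ≠ 0) (hj : N.src ρ j ≠ 0) (hz : N.src ρ z ≠ 0) : z = i ∨ z = j := by
  have hsub : ({i, j} : Finset (Fin n)) ⊆ Finset.univ.filter fun x => N.src ρ x ≠ 0 := by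
    simp [Finset.insert_subset_iff, hi, hj]
  have hcard : (Finset.univ.filter fun x => N.src ρ x ≠ 0).card ≤
      ({i, j} : Finset (Fin n)).card := by
    rw [Finset.card_pair hij]
    exact hb.le
  have hz' : z ∈ Finset.univ.filter fun x => N.src ρ x ≠ 0 := by simpa using hz
  simpa [← Finset.eq_of_subset_of_card_le hsub hcard] using hz'

lemma bpe_of_src_eq_zero (h4 : N.bispIrrev) {i : Fin n} {ρ : N.R} (hb : N.bisp ρ)
    (he : N.edge i ρ) (hs : N.src ρ i = 0) : N.bpe i ρ :=
  ⟨hb, h4 ρ hb, hs, he.resolve_left (not_not.2 hs)⟩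

/-- The R-nodes `(ρ, x)` of `N.modified` into which a bispecies reaction `ρ` is split, one per
reactant `x`. -/
abbrev SplitNode (N : Net n) := {p : N.R × Fin n // N.bisp p.1 ∧ N.src p.1 p.2 ≠ 0}

lemma modified_edge_inr {i : Fin n} {p : N.SplitNode} :
    N.modified.edge i (Sum.inr p) ↔ N.edge i p.1.1 := by
  by_cases hi : i = p.1.2
  · subst hi
    simp [edge, modified, p.2.2]
  · simp only [edge, modified, Sum.elim_inr, if_neg hi, ne_eq, not_true_eq_false, false_or]
    omega

lemma modified_dir_inr {i : Fin n} {p : N.SplitNode} :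
    N.modified.dir i (Sum.inr p) ↔ i ≠ p.1.2 ∧ N.edge i p.1.1 := by
  rw [← modified_edge_inr]
  by_cases hi : i = p.1.2
  · subst hi
    simp [dir, modified, p.2.2]
  · simp [dir, edge, modified, hi]

lemma edge_phi {i : Fin n} {R : N.modified.R} (h : N.modified.edge i R) :
    N.edge i (N.phi R) := by
  rcases R with r | p
  · exact h
  · exact modified_edge_inr.1 h

lemma exists_inr_of_phi_eq {R R' : N.modified.R} (hne : R ≠ R') (h : N.phi R = N.phi R') :
    ∃ p q : N.SplitNode, R = Sum.inr p ∧ R' = Sum.inr q ∧ p.1.1 = q.1.1 ∧ p.1.2 ≠ q.1.2 := by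
  rcases R with r | p <;> rcases R' with r' | q
  · exact absurd (congrArg Sum.inl (Subtype.ext h)) hne
  · exact (r.2 (congrArg N.bisp h ▸ q.2.1)).elim
  · exact (r'.2 (congrArg N.bisp h ▸ p.2.1)).elim
  · refine ⟨p, q, rfl, rfl, h, fun hx => hne ?_⟩
    exact congrArg Sum.inr (Subtype.ext (Prod.ext h hx))

namespace Cycle

variable {m : ℕ}

/-- The positions `b, b + 1, …, b + L + 1` of `C`, closed up by an edge from the last
reaction back to the first species. -/
def window (C : N.Cycle m) (b : Fin (m + 2)) {L : ℕ} (hL : L + 2 ≤ m + 2)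
    (hclose : N.edge (C.s b) (C.r (b + Fin.castLE hL (Fin.last (L + 1))))) : N.Cycle L where
  s t := C.s (b + Fin.castLE hL t)
  r t := C.r (b + Fin.castLE hL t)
  edge_sr t := C.edge_sr _
  undir_sr t := C.undir_sr _
  edge_rs t := by
    by_cases ht : t = Fin.last (L + 1)
    · subst ht
      simpa using hclose
    · rw [Fin.castLE_add_one hL ht, ← add_assoc]
      exact C.edge_rs _
  sinj _ _ h := Fin.castLE_injective hL (add_left_cancel (C.sinj h))
  rinj _ _ h := Fin.castLE_injective hL (add_left_cancel (C.rinj h))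

lemma eq_or_eq_of_s_succ_eq {C : N.Cycle m} {k l : Fin (m + 2)} (hk : C.s (k + 1) = C.s l)
    (hl : C.s (l + 1) = C.s k) (t : Fin (m + 2)) : t = k ∨ t = l := by
  have hkl : k + 1 = l := C.sinj hk
  subst hkl
  exact Fin.eq_or_eq_add_one_of_add_one_add_one_eq (C.sinj hl) t

lemma s_eq_of_r_eq_inr {C : N.modified.Cycle m} {k : Fin (m + 2)} {p : N.SplitNode}
    (hk : C.r k = Sum.inr p) : C.s k = p.1.2 := by
  by_contra hne
  exact C.undir_sr k (hk ▸ modified_dir_inr.2 ⟨hne, modified_edge_inr.1 (hk ▸ C.edge_sr k)⟩)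

lemma not_dir_phi (C : N.modified.Cycle m) (k : Fin (m + 2)) :
    ¬ N.dir (C.s k) (N.phi (C.r k)) := by
  rcases hk : C.r k with r | p
  · have h := C.undir_sr k
    rw [hk] at h
    exact h
  · rw [s_eq_of_r_eq_inr hk]
    exact fun hd => p.2.2 hd.2.1

def image (C : N.modified.Cycle m) (hinj : Function.Injective fun k => N.phi (C.r k)) :
    N.Cycle m where
  s := C.s
  r k := N.phi (C.r k)
  edge_sr k := edge_phi (C.edge_sr k)
  undir_sr := C.not_dir_phi
  edge_rs k := edge_phi (C.edge_rs k)
  sinj := C.sinj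
  rinj := hinj

lemma s_succ_eq_of_src_ne_zero {C : N.modified.Cycle m} {k l : Fin (m + 2)}
    {p q : N.SplitNode} (hk : C.r k = Sum.inr p) (hl : C.r l = Sum.inr q) (hρ : p.1.1 = q.1.1)
    (hxy : p.1.2 ≠ q.1.2) (hsrc : N.src p.1.1 (C.s (k + 1)) ≠ 0) : C.s (k + 1) = C.s l := by
  rw [s_eq_of_r_eq_inr hl]
  refine (eq_or_eq_of_bisp p.2.1 hxy p.2.2 (hρ ▸ q.2.2) hsrc).resolve_left fun h => ?_
  have : k + 1 = k := C.sinj (h.trans (s_eq_of_r_eq_inr hk).symm)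
  simp at this

lemma isCPairImage_of_s_succ_eq {C : N.modified.Cycle m} {k l : Fin (m + 2)}
    {p q : N.SplitNode} (hk : C.r k = Sum.inr p) (hl : C.r l = Sum.inr q) (hρ : p.1.1 = q.1.1)
    (hxy : p.1.2 ≠ q.1.2) (hkl : C.s (k + 1) = C.s l) (hlk : C.s (l + 1) = C.s k) :
    C.isCPairImage := by
  have hsk := s_eq_of_r_eq_inr hk
  have hsl := s_eq_of_r_eq_inr hl
  have hφk : N.phi (C.r k) = p.1.1 := by rw [hk]; rfl
  have hφl : N.phi (C.r l) = p.1.1 := by rw [hl, hρ]; rfl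
  refine ⟨p.1.1, p.1.2, q.1.2, ⟨hxy, p.2.2, hρ ▸ q.2.2⟩, fun i ρ => ⟨?_, ?_⟩⟩
  · rintro ⟨t, rfl, hst⟩
    rcases eq_or_eq_of_s_succ_eq hkl hlk t with rfl | rfl
    · exact ⟨hφk, by rw [hkl] at hst; grind⟩
    · exact ⟨hφl, by rw [hlk] at hst; grind⟩
  · rintro ⟨rfl, rfl | rfl⟩
    · exact ⟨k, hφk, Or.inl hsk⟩
    · exact ⟨l, hφl, Or.inl hsl⟩

/-- `C` leaves a node of a split bispecies reaction through a product species of that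
reaction, i.e. `Φ` maps one of its edges to a bispecies production edge. -/
def ExitsToProduct (C : N.modified.Cycle m) : Prop :=
  ∃ a p, C.r a = Sum.inr p ∧ N.src p.1.1 (C.s (a + 1)) = 0

lemma hasBPE_image (h4 : N.bispIrrev) {C : N.modified.Cycle m}
    (hinj : Function.Injective fun k => N.phi (C.r k)) (hC : C.ExitsToProduct) :
    (C.image hinj).hasBPE := by
  obtain ⟨a, p, ha, hsrc⟩ := hC
  have hedge := edge_phi (C.edge_rs a)
  rw [ha] at hedge
  refine ⟨a, ?_⟩
  show N.bpe (C.s (a + 1)) (N.phi (C.r a))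
  rw [ha]
  exact bpe_of_src_eq_zero h4 p.2.1 hedge hsrc

/-- If the arc of `C` from the split node at `k` to the one at `l` leaves `k` through a product,
the edge from `l` to that product closes it up into a shorter cycle with the same defect. -/
lemma exists_shorter_exitsToProduct {C : N.modified.Cycle m} {k l : Fin (m + 2)}
    {p q : N.SplitNode} (hkl : k ≠ l) (hk : C.r k = Sum.inr p) (hl : C.r l = Sum.inr q)
    (hρ : p.1.1 = q.1.1) (hsrc : N.src p.1.1 (C.s (k + 1)) = 0) :
    ∃ L < m, ∃ W : N.modified.Cycle L, W.ExitsToProduct := by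
  have hedge : N.edge (C.s (k + 1)) q.1.1 := by
    have h := edge_phi (C.edge_rs k)
    rw [hk] at h
    exact hρ ▸ h
  set d := l - (k + 1) with hd
  have hd0 : d.val ≠ 0 := by
    rw [Fin.val_ne_zero_iff, hd, sub_ne_zero]
    rintro rfl
    exact q.2.2 (hρ ▸ s_eq_of_r_eq_inr hl ▸ hsrc)
  have hdm : d.val ≠ m + 1 := fun h => by
    have h0 : d + 1 = 0 := by rw [show d = Fin.last (m + 1) from Fin.ext h, Fin.last_add_one]
    exact hkl (sub_eq_zero.1 (by rw [← h0, hd]; abel)).symm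
  obtain ⟨L, hL⟩ : ∃ L, d.val = L + 1 := ⟨d.val - 1, by omega⟩
  have hLm : L + 2 ≤ m + 2 := by have := d.isLt; omega
  have hlast : k + 1 + Fin.castLE hLm (Fin.last (L + 1)) = l := by
    have : Fin.castLE hLm (Fin.last (L + 1)) = d := Fin.ext (by simp [hL])
    rw [this, hd]
    abel
  refine ⟨L, by omega, C.window (k + 1) hLm (by rw [hlast, hl]; exact modified_edge_inr.2 hedge),
    Fin.last _, q, ?_, ?_⟩
  · show C.r (k + 1 + Fin.castLE hLm (Fin.last (L + 1))) = _
    rw [hlast, hl]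
  · show N.src q.1.1 (C.s (k + 1 + Fin.castLE hLm (Fin.last (L + 1) + 1))) = 0
    simpa [← hρ] using hsrc

theorem not_exitsToProduct (h4 : N.bispIrrev) (hnb : ∀ (m : ℕ) (C : N.Cycle m), ¬ C.hasBPE) :
    ∀ {m} (C : N.modified.Cycle m), ¬ C.ExitsToProduct := by
  intro m
  induction m using Nat.strong_induction_on with
  | _ m ih =>
  intro C hC
  by_cases hinj : Function.Injective fun k => N.phi (C.r k)
  · exact hnb m _ (hasBPE_image h4 hinj hC)
  obtain ⟨k, l, hφ, hkl⟩ := Function.not_injective_iff.1 hinj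
  obtain ⟨p, q, hk, hl, hρ, hxy⟩ := exists_inr_of_phi_eq (C.rinj.ne hkl) hφ
  have exit_reactant : ∀ {k l p q}, k ≠ l → C.r k = Sum.inr p → C.r l = Sum.inr q →
      p.1.1 = q.1.1 → N.src p.1.1 (C.s (k + 1)) ≠ 0 := fun hkl hk hl hρ hsrc => by
    obtain ⟨L, hL, W, hW⟩ := exists_shorter_exitsToProduct hkl hk hl hρ hsrc
    exact ih L hL W hW
  have hk1 := exit_reactant hkl hk hl hρ
  have hl1 := exit_reactant hkl.symm hl hk hρ.symm
  obtain ⟨a, r, ha, hsrc⟩ := hC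
  rcases eq_or_eq_of_s_succ_eq (s_succ_eq_of_src_ne_zero hk hl hρ hxy hk1)
    (s_succ_eq_of_src_ne_zero hl hk hρ.symm hxy.symm hl1) a with rfl | rfl
  · obtain rfl : p = r := Sum.inr_injective (hk.symm.trans ha)
    exact hk1 hsrc
  · obtain rfl : q = r := Sum.inr_injective (hl.symm.trans ha)
    exact hl1 hsrc

theorem src_s_succ_ne_zero (h4 : N.bispIrrev) (hnb : ∀ (m : ℕ) (C : N.Cycle m), ¬ C.hasBPE)
    (C : N.modified.Cycle m) {k : Fin (m + 2)} {p : N.SplitNode} (hk : C.r k = Sum.inr p) :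
    N.src p.1.1 (C.s (k + 1)) ≠ 0 :=
  fun hsrc => not_exitsToProduct h4 hnb C ⟨k, p, hk, hsrc⟩

end Cycle

end Net

theorem stmt_12_general {n : ℕ} (N : Net n)
    (h4 : N.bispIrrev) (hnb : ∀ (m : ℕ) (C : N.Cycle m), ¬ C.hasBPE)
    {m : ℕ} (Ct : (N.modified).Cycle m) :
    Ct.isCPairImage ∨
      (Function.Injective (fun k => N.phi (Ct.r k)) ∧
        ∃ C : N.Cycle m, C.s = Ct.s ∧ C.r = fun k => N.phi (Ct.r k)) := by
  by_cases hinj : Function.Injective fun k => N.phi (Ct.r k)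
  · exact Or.inr ⟨hinj, Ct.image hinj, rfl, rfl⟩
  obtain ⟨k, l, hφ, hkl⟩ := Function.not_injective_iff.1 hinj
  obtain ⟨p, q, hk, hl, hρ, hxy⟩ := Net.exists_inr_of_phi_eq (Ct.rinj.ne hkl) hφ
  exact Or.inl (Net.Cycle.isCPairImage_of_s_succ_eq hk hl hρ hxy
    (Net.Cycle.s_succ_eq_of_src_ne_zero hk hl hρ hxy (Net.Cycle.src_s_succ_ne_zero h4 hnb Ct hk))
    (Net.Cycle.s_succ_eq_of_src_ne_zero hl hk hρ.symm hxy.symm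
      (Net.Cycle.src_s_succ_ne_zero h4 hnb Ct hl)))

/-- If no cycle of the original DSR graph contains a bispecies production edge,
then every cycle `C̃` of the modified DSR graph either maps under `Φ` onto a
c-pair, or `Φ` is injective on `C̃` and its image is a cycle of the original
DSR graph. -/
theorem stmt_12 {n : ℕ} (N : Net n) (h2 : N.noCat) (h3 : N.atMostTwo)
    (h4 : N.bispIrrev) (hnb : ∀ (m : ℕ) (C : N.Cycle m), ¬ C.hasBPE)
    {m : ℕ} (Ct : (N.modified).Cycle m) :
    Ct.isCPairImage ∨
      (Function.Injective (fun k => N.phi (Ct.r k)) ∧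
        ∃ C : N.Cycle m, C.s = Ct.s ∧ C.r = fun k => N.phi (Ct.r k)) :=
  stmt_12_general N h4 hnb Ct
end

section
/- In a CST network on n species in which reaction R_n is replaced by the outflow X_n → 0, the n reactions y_1 → y'_1, ..., y_n → y'_n satisfy det(y_1, ..., y_n) · det(y_1 − y'_1, ..., y_n − y'_n) = (a_1·a_2·⋯·a_{n-1})² > 0. -/
open Finset

/-- The reactant vector `y i` of reaction `R i` of the CST network on the
`n+1` species `X 0, …, X n` in which the last reaction is replaced by the
outflow `X n → 0`: for `i ≠ n`, `R i` is either the sequestration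
`a i · X i + b (i+1) · X (i+1) → 0` (when `seq i`) or the transmutation
`a i · X i → b (i+1) · X (i+1)`. -/
noncomputable def cstSrc (n : ℕ) (a b : Fin (n + 1) → ℝ) (seq : Fin (n + 1) → Bool)
    (i s : Fin (n + 1)) : ℝ :=
  if i = Fin.last n then (if s = i then 1 else 0)
  else (if s = i then a i else 0) + (if seq i ∧ s = i + 1 then b (i + 1) else 0)

/-- The product vector `y' i` of reaction `R i`. -/
noncomputable def cstTgt (n : ℕ) (a b : Fin (n + 1) → ℝ) (seq : Fin (n + 1) → Bool)
    (i s : Fin (n + 1)) : ℝ :=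
  if i = Fin.last n then 0
  else if seq i then 0 else (if s = i + 1 then b (i + 1) else 0)

/-- For the CST network with its last reaction replaced by the outflow
`X n → 0`, `det(y 0, …, y n) · det(y 0 − y' 0, …, y n − y' n) = (a 0 ⋯ a (n-1))² > 0`. -/
theorem stmt_18 (n : ℕ) (a b : Fin (n + 1) → ℝ) (seq : Fin (n + 1) → Bool)
    (ha : ∀ i, 0 < a i) (hb : ∀ i, 0 < b i) :
    (Matrix.of fun s i : Fin (n + 1) => cstSrc n a b seq i s).det *
        (Matrix.of fun s i : Fin (n + 1) =>
          cstSrc n a b seq i s - cstTgt n a b seq i s).det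
      = (∏ i ∈ Finset.univ.erase (Fin.last n), a i) ^ 2 ∧
    0 < (∏ i ∈ Finset.univ.erase (Fin.last n), a i) ^ 2 := by
  have hval : ∀ i : Fin (n+1), i ≠ Fin.last n → ((i+1 : Fin (n+1)) : ℕ) = (i : ℕ) + 1 :=
    fun i h => Fin.val_add_one_of_lt (Fin.lt_last_iff_ne_last.mpr h)
  -- s < i → s ≠ i + 1, when i ≠ last
  have hsne : ∀ s i : Fin (n+1), s < i → i ≠ Fin.last n → s ≠ i + 1 := by
    intro s i hlt h heq
    have h1 := hval i h
    have h2 : (s : ℕ) < (i : ℕ) := hlt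
    have h3 : (s : ℕ) = ((i + 1 : Fin (n+1)) : ℕ) := by rw [heq]
    omega
  have hine : ∀ i : Fin (n+1), i ≠ Fin.last n → i ≠ i + 1 := by
    intro i h heq
    have h1 := hval i h
    have h3 : (i : ℕ) = ((i + 1 : Fin (n+1)) : ℕ) := by rw [← heq]
    omega
  -- src is zero above diagonal
  have hsrc0 : ∀ s i : Fin (n+1), s < i → cstSrc n a b seq i s = 0 := by
    intro s i hlt
    unfold cstSrc
    by_cases h : i = Fin.last n
    · rw [if_pos h, if_neg (ne_of_lt hlt)]
    · rw [if_neg h, if_neg (ne_of_lt hlt), if_neg (by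
        rintro ⟨-, hs⟩; exact hsne s i hlt h hs)]
      ring
  have htgt0 : ∀ s i : Fin (n+1), s < i → cstTgt n a b seq i s = 0 := by
    intro s i hlt
    unfold cstTgt
    by_cases h : i = Fin.last n
    · rw [if_pos h]
    · rw [if_neg h]
      by_cases hq : seq i
      · rw [if_pos hq]
      · rw [if_neg hq, if_neg (hsne s i hlt h)]
  have hsrcd : ∀ i : Fin (n+1), cstSrc n a b seq i i = if i = Fin.last n then 1 else a i := by
    intro i
    unfold cstSrc
    by_cases h : i = Fin.last n
    · rw [if_pos h, if_pos rfl, if_pos h]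
    · rw [if_neg h, if_pos rfl, if_neg (by
        rintro ⟨-, hs⟩; exact hine i h hs), if_neg h]
      ring
  have htgtd : ∀ i : Fin (n+1), cstTgt n a b seq i i = 0 := by
    intro i
    unfold cstTgt
    by_cases h : i = Fin.last n
    · rw [if_pos h]
    · rw [if_neg h]
      by_cases hq : seq i
      · rw [if_pos hq]
      · rw [if_neg hq, if_neg (hine i h)]
  have hprod : (∏ i : Fin (n+1), (if i = Fin.last n then (1:ℝ) else a i))
      = ∏ i ∈ Finset.univ.erase (Fin.last n), a i := by
    rw [← Finset.mul_prod_erase _ _ (Finset.mem_univ (Fin.last n)), if_pos rfl, one_mul]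
    exact Finset.prod_congr rfl fun i hi => if_neg (Finset.ne_of_mem_erase hi)
  have hdet1 : (Matrix.of fun s i : Fin (n + 1) => cstSrc n a b seq i s).det
      = ∏ i ∈ Finset.univ.erase (Fin.last n), a i := by
    have h0 := Matrix.det_of_lowerTriangular
      (Matrix.of fun s i : Fin (n + 1) => cstSrc n a b seq i s)
      (fun s i h => hsrc0 s i h)
    rw [h0, ← hprod]
    exact Finset.prod_congr rfl fun i _ => hsrcd i
  have hdet2 : (Matrix.of fun s i : Fin (n + 1) =>
      cstSrc n a b seq i s - cstTgt n a b seq i s).det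
      = ∏ i ∈ Finset.univ.erase (Fin.last n), a i := by
    have h0 := Matrix.det_of_lowerTriangular
      (Matrix.of fun s i : Fin (n + 1) => cstSrc n a b seq i s - cstTgt n a b seq i s)
      (fun s i h => by simp only [Matrix.of_apply]; rw [hsrc0 s i h, htgt0 s i h, sub_zero])
    rw [h0, ← hprod]
    exact Finset.prod_congr rfl fun i _ => by
      simp only [Matrix.of_apply]; rw [hsrcd i, htgtd i, sub_zero]
  have hpos : 0 < ∏ i ∈ Finset.univ.erase (Fin.last n), a i :=
    Finset.prod_pos fun i _ => ha i
  refine ⟨?_, pow_pos hpos 2⟩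
  rw [hdet1, hdet2, sq]
end
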